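/- arXiv:2211.00622 — 8 statements merged into one kernel-verified Lean document; each statement's English description precedes it below -/
import Mathlib

section
/- Let n be a positive integer divisible by 4, and let G be the cubic bipartite graph with vertex set {x_i, y_i : i ∈ ℤ_n} and edges x_i y_{i-2}, x_i y_i, x_i y_{i+1} (indices mod n). Then the square G² is 4-colorable. -/
open SimpleGraph

/-- The square of a graph: vertices at distance at most 2 are adjacent. -/
def square {V : Type*} (G : SimpleGraph V) : SimpleGraph V where
  Adj u v := u ≠ v ∧ (G.Adj u v ∨ ∃ w, G.Adj u w ∧ G.Adj w v)
  symm := by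
    constructor
    rintro u v ⟨h, h2 | ⟨w, hw1, hw2⟩⟩
    · exact ⟨h.symm, Or.inl h2.symm⟩
    · exact ⟨h.symm, Or.inr ⟨w, hw2.symm, hw1.symm⟩⟩
  loopless := ⟨fun u h => h.1 rfl⟩

/-- The cubic bipartite graph on `{x_i} ⊕ {y_i}`, `i ∈ ZMod n`, with edges
`x_i y_{i-2}`, `x_i y_i`, `x_i y_{i+1}`. -/
def cubicGraphA (n : ℕ) : SimpleGraph (ZMod n ⊕ ZMod n) where
  Adj a b := match a, b with
    | .inl i, .inr j => j = i - 2 ∨ j = i ∨ j = i + 1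
    | .inr j, .inl i => j = i - 2 ∨ j = i ∨ j = i + 1
    | _, _ => False
  symm := by
    constructor
    rintro (i | i) (j | j) h
    · exact h.elim
    · exact h
    · exact h
    · exact h.elim
  loopless := ⟨by rintro (i | i) h <;> exact h⟩

/-!
Colour `x_i` by `i mod 4` and `y_j` by `j + 1 mod 4`. An edge `x_i y_j` has `j - i ∈ {-2, 0, 1}`,
so its end colours differ by `-1`, `1` or `2`. Two distinct vertices on the same side with a common
neighbour differ by a difference of two distinct offsets, one of `±1, ±2, ±3`; these stay nonzero
modulo `4`, and reduction `ZMod n → ZMod 4` exists because `4 ∣ n`.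
-/

theorem ZMod.intCast_ne_zero_of_abs_lt {m : ℕ} {k : ℤ} (hk : k ≠ 0) (hkm : |k| < m) :
    (k : ZMod m) ≠ 0 := fun h =>
  hk (Int.eq_zero_of_abs_lt_dvd ((ZMod.intCast_zmod_eq_zero_iff_dvd k m).1 h) hkm)

namespace cubicGraphA

abbrev offsets : Finset ℤ := {-2, 0, 1}

theorem intCast_injOn_offsets {m : ℕ} (hm : 4 ≤ m) :
    Set.InjOn (Int.cast : ℤ → ZMod m) offsets := by
  intro d hd e he hde
  by_contra hne
  refine ZMod.intCast_ne_zero_of_abs_lt (sub_ne_zero.2 hne) ?_ (by push_cast; rw [hde, sub_self])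
  simp only [offsets, Finset.coe_insert, Finset.coe_singleton, Set.mem_insert_iff,
    Set.mem_singleton_iff] at hd he
  rcases hd with rfl | rfl | rfl <;> rcases he with rfl | rfl | rfl <;> norm_num <;> omega

theorem intCast_add_one_ne_zero_of_mem_offsets {m : ℕ} (hm : 3 ≤ m) {d : ℤ} (hd : d ∈ offsets) :
    (d : ZMod m) + 1 ≠ 0 := by
  refine mod_cast ZMod.intCast_ne_zero_of_abs_lt (k := d + 1) ?_ ?_
  all_goals simp only [offsets, Finset.mem_insert, Finset.mem_singleton] at hd
  all_goals rcases hd with rfl | rfl | rfl <;> norm_num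
  all_goals omega

variable {n : ℕ}

theorem adj_inl_inr {i j : ZMod n} :
    (cubicGraphA n).Adj (.inl i) (.inr j) ↔ ∃ d ∈ offsets, j = i + d := by
  simp [cubicGraphA, sub_eq_add_neg, or_comm]

theorem adj_inr_inl {i j : ZMod n} :
    (cubicGraphA n).Adj (.inr j) (.inl i) ↔ ∃ d ∈ offsets, j = i + d := by
  rw [adj_comm, adj_inl_inr]

variable {m : ℕ} (h : m ∣ n)

def color : ZMod n ⊕ ZMod n → ZMod m :=
  Sum.elim (ZMod.castHom h (ZMod m)) (fun j => ZMod.castHom h (ZMod m) j + 1)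

theorem color_inl_ne_color_inr (hm : 3 ≤ m) {i j : ZMod n}
    (hij : (cubicGraphA n).Adj (.inl i) (.inr j)) : color h (.inl i) ≠ color h (.inr j) := by
  obtain ⟨d, hd, rfl⟩ := adj_inl_inr.1 hij
  simp only [color, Sum.elim_inl, Sum.elim_inr, map_add, map_intCast]
  intro heq
  exact intCast_add_one_ne_zero_of_mem_offsets hm hd (by linear_combination -heq)

theorem color_ne_of_adj (hm : 3 ≤ m) {u v : ZMod n ⊕ ZMod n} (huv : (cubicGraphA n).Adj u v) :
    color h u ≠ color h v :=
  match u, v, huv with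
  | .inl _, .inr _, huv => color_inl_ne_color_inr h hm huv
  | .inr _, .inl _, huv => (color_inl_ne_color_inr h hm huv.symm).symm

theorem color_ne_of_adj_of_adj (hm : 4 ≤ m) {u v w : ZMod n ⊕ ZMod n} (huv : u ≠ v)
    (huw : (cubicGraphA n).Adj u w) (hwv : (cubicGraphA n).Adj w v) :
    color h u ≠ color h v :=
  match u, w, v, huw, hwv with
  | .inl i, .inr _, .inl k, huw, hwv => by
    obtain ⟨d, hd, rfl⟩ := adj_inl_inr.1 huw
    obtain ⟨e, he, hde⟩ := adj_inr_inl.1 hwv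
    intro hcolor
    simp only [color, Sum.elim_inl] at hcolor
    have hcast := congrArg (ZMod.castHom h (ZMod m)) hde
    simp only [map_add, map_intCast, hcolor, add_right_inj] at hcast
    rw [intCast_injOn_offsets hm hd he hcast, add_left_inj] at hde
    exact huv (congrArg _ hde)
  | .inr _, .inl i, .inr _, huw, hwv => by
    obtain ⟨d, hd, rfl⟩ := adj_inr_inl.1 huw
    obtain ⟨e, he, rfl⟩ := adj_inl_inr.1 hwv
    intro hcolor
    simp only [color, Sum.elim_inr, map_add, map_intCast, add_left_inj, add_right_inj] at hcolor
    rw [intCast_injOn_offsets hm hd he hcolor] at huv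
    exact huv rfl

def squareColoring (hm : 4 ≤ m) : (square (cubicGraphA n)).Coloring (ZMod m) :=
  Coloring.mk (color h) fun
    | ⟨_, .inl huv⟩ => color_ne_of_adj h (by omega) huv
    | ⟨huv, .inr ⟨_, huw, hwv⟩⟩ => color_ne_of_adj_of_adj h hm huv huw hwv

end cubicGraphA

theorem stmt1_general (n : ℕ) (h4 : 4 ∣ n) :
    (square (cubicGraphA n)).Colorable 4 := by
  simpa using (cubicGraphA.squareColoring h4 le_rfl).colorable

/-- If `4 ∣ n`, the square of the graph is `4`-colorable. -/
theorem stmt1 (n : ℕ) (hn : 0 < n) (h4 : 4 ∣ n) :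
    (square (cubicGraphA n)).Colorable 4 :=
  stmt1_general n h4
end

section
/- Let G = L(S(K₄)) be the line graph of the subdivision of K₄. Then the square G² is not 4-choosable: there exists a list assignment L, with each list of the form {1,2,3,4,5}∖{i} (so of size 4), such that G² admits no proper L-coloring. -/
/-!
Give `v_{ij}` the list `{1, …, 5} \ {i xor j}`. The values `i xor j` are `1, 2, 3`, one for each
perfect matching `{ij, kl}` of `K₄`. No proper colouring from these lists exists: this is checked
by a backtracking search over partial list colourings, which is sound for any graph because a
proper list colouring restricts to a successful branch of the search.
-/

open SimpleGraph

/-- The line graph of the subdivision of `K_n`: vertices `v_{i,j}` (`i ≠ j`),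
with `v_{i,j} ∼ v_{j,i}` and `v_{i,j} ∼ v_{i,j'}`. -/
def LSK (n : ℕ) : SimpleGraph {p : Fin n × Fin n // p.1 ≠ p.2} where
  Adj a b := a ≠ b ∧ ((a.1.1 = b.1.2 ∧ a.1.2 = b.1.1) ∨ a.1.1 = b.1.1)
  symm := by
    constructor
    rintro a b ⟨hne, ⟨h1, h2⟩ | h1⟩
    · exact ⟨hne.symm, Or.inl ⟨h2.symm, h1.symm⟩⟩
    · exact ⟨hne.symm, Or.inr h1.symm⟩
  loopless := ⟨fun a h => h.1 rfl⟩

namespace SimpleGraph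

variable {V α : Type*}

def IsListColoring (G : SimpleGraph V) (L : V → Finset α) (c : V → α) : Prop :=
  (∀ v, c v ∈ L v) ∧ ∀ ⦃u v⦄, G.Adj u v → c u ≠ c v

/-- The partial colouring `asg` (a list of vertex–colour pairs) can be extended, colouring the
vertices `vs` in order, each from its list and differently from its already coloured neighbours. -/
def ExtendsToListColoring (G : SimpleGraph V) (L : V → Finset α) :
    List V → List (V × α) → Prop
  | [], _ => True
  | v :: vs, asg => ∃ k ∈ L v, (∀ p ∈ asg, G.Adj p.1 v → p.2 ≠ k) ∧
      ExtendsToListColoring G L vs ((v, k) :: asg)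

instance decidableExtendsToListColoring (G : SimpleGraph V) [DecidableRel G.Adj] [DecidableEq α]
    (L : V → Finset α) : ∀ vs asg, Decidable (G.ExtendsToListColoring L vs asg)
  | [], _ => inferInstanceAs (Decidable True)
  | v :: vs, asg =>
    have := decidableExtendsToListColoring G L vs
    inferInstanceAs (Decidable (∃ k ∈ L v, (∀ p ∈ asg, G.Adj p.1 v → p.2 ≠ k) ∧ _))

theorem IsListColoring.extendsToListColoring {G : SimpleGraph V} {L : V → Finset α} {c : V → α}
    (hc : G.IsListColoring L c) :
    ∀ (vs : List V) (asg : List (V × α)), (∀ p ∈ asg, c p.1 = p.2) →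
      G.ExtendsToListColoring L vs asg
  | [], _, _ => trivial
  | v :: vs, asg, hasg =>
    ⟨c v, hc.1 v, fun p hp hadj => hasg p hp ▸ hc.2 hadj,
      hc.extendsToListColoring vs _ <| by
        rintro p (_ | ⟨_, hp⟩)
        exacts [rfl, hasg p hp]⟩

theorem not_isListColoring_of_not_extendsToListColoring {G : SimpleGraph V} {L : V → Finset α}
    {vs : List V} (h : ¬ G.ExtendsToListColoring L vs []) (c : V → α) :
    ¬ G.IsListColoring L c :=
  fun hc => h (hc.extendsToListColoring vs [] (by simp))

end SimpleGraph

instance {V : Type*} [Fintype V] [DecidableEq V] (G : SimpleGraph V) [DecidableRel G.Adj] :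
    DecidableRel (square G).Adj :=
  fun u v => inferInstanceAs (Decidable (u ≠ v ∧ (G.Adj u v ∨ ∃ w, G.Adj u w ∧ G.Adj w v)))

instance (n : ℕ) : DecidableRel (LSK n).Adj :=
  fun a b => inferInstanceAs
    (Decidable (a ≠ b ∧ ((a.1.1 = b.1.2 ∧ a.1.2 = b.1.1) ∨ a.1.1 = b.1.1)))

def arcList (n : ℕ) : List {p : Fin n × Fin n // p.1 ≠ p.2} :=
  (List.finRange n).flatMap fun i => (List.finRange n).filterMap fun j =>
    if h : i ≠ j then some ⟨(i, j), h⟩ else none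

def xorList (v : {p : Fin 4 × Fin 4 // p.1 ≠ p.2}) : Finset ℕ :=
  ({1, 2, 3, 4, 5} : Finset ℕ).erase (v.1.1.val ^^^ v.1.2.val)

theorem xor_mem_colors (v : {p : Fin 4 × Fin 4 // p.1 ≠ p.2}) :
    v.1.1.val ^^^ v.1.2.val ∈ ({1, 2, 3, 4, 5} : Finset ℕ) := by
  revert v
  decide

theorem card_xorList (v : {p : Fin 4 × Fin 4 // p.1 ≠ p.2}) : (xorList v).card = 4 := by
  rw [xorList, Finset.card_erase_of_mem (xor_mem_colors v)]
  rfl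

set_option maxRecDepth 10000 in
theorem not_extendsToListColoring_square_LSK_four :
    ¬ (square (LSK 4)).ExtendsToListColoring xorList (arcList 4) [] := by
  decide

/-- The square of `L(S(K₄))` is not 4-choosable: there is a list assignment with
each list of the form `{1,2,3,4,5} \ {i}` (hence of size 4) from which no proper
coloring of the square exists. -/
theorem stmt6 :
    (∃ L : {p : Fin 4 × Fin 4 // p.1 ≠ p.2} → Finset ℕ,
      (∀ v, ∃ i ∈ ({1, 2, 3, 4, 5} : Finset ℕ),
        L v = ({1, 2, 3, 4, 5} : Finset ℕ).erase i) ∧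
      (∀ v, (L v).card = 4) ∧
      ¬ ∃ c : {p : Fin 4 × Fin 4 // p.1 ≠ p.2} → ℕ, (∀ v, c v ∈ L v) ∧
        ∀ ⦃u v⦄, (square (LSK 4)).Adj u v → c u ≠ c v) ∧
    ¬ ∀ L : {p : Fin 4 × Fin 4 // p.1 ≠ p.2} → Finset ℕ,
        (∀ v, (L v).card = 4) →
        ∃ c : {p : Fin 4 × Fin 4 // p.1 ≠ p.2} → ℕ, (∀ v, c v ∈ L v) ∧
          ∀ ⦃u v⦄, (square (LSK 4)).Adj u v → c u ≠ c v := by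
  have hnone : ¬ ∃ c, (square (LSK 4)).IsListColoring xorList c := fun ⟨c, hc⟩ =>
    not_isListColoring_of_not_extendsToListColoring not_extendsToListColoring_square_LSK_four c hc
  exact ⟨⟨xorList, fun v => ⟨_, xor_mem_colors v, rfl⟩, card_xorList, hnone⟩,
    fun h => hnone (h xorList card_xorList)⟩
end

section
/- Let P = P(n,3) be the generalized Petersen graph with n divisible by 5, and let G = L(P) be its line graph with vertices x_i, y_i, z_i corresponding to edges v_i v_{i+1}, v_i u_i, u_i u_{i+3} respectively. Then χ(G²) = 5, witnessed by coloring x_i, y_{i+3}, z_{i+4} with color r whenever i ≡ r (mod 5), r ∈ {1,...,5}. -/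
/-!
Two vertices are adjacent in `square G` exactly when both lie in the closed neighbourhood of a
common vertex, and every closed neighbourhood is a clique of `square G`. In the line graph of the
cubic graph `P(n,3)` the closed neighbourhood of an edge consists of five edges, and the colouring
`x_i, y_{i+3}, z_{i+4} ↦ i mod 5` gives these five edges five consecutive residues. Hence it is a
proper 5-colouring of the square, while the closed neighbourhood of `x_0` is a 5-clique.
-/

open SimpleGraph

/-- The line graph of the (multi)graph whose edges are indexed by `E` with
endpoints given by `ends`: two distinct edges are adjacent iff they share an
endpoint. -/
def lineOf {E V : Type*} (ends : E → V × V) : SimpleGraph E where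
  Adj a b := a ≠ b ∧ ((ends a).1 = (ends b).1 ∨ (ends a).1 = (ends b).2 ∨
    (ends a).2 = (ends b).1 ∨ (ends a).2 = (ends b).2)
  symm := by
    constructor
    rintro a b ⟨h, h2 | h2 | h2 | h2⟩
    · exact ⟨h.symm, Or.inl h2.symm⟩
    · exact ⟨h.symm, Or.inr (Or.inr (Or.inl h2.symm))⟩
    · exact ⟨h.symm, Or.inr (Or.inl h2.symm)⟩
    · exact ⟨h.symm, Or.inr (Or.inr (Or.inr h2.symm))⟩
  loopless := ⟨fun a h => h.1 rfl⟩

/-- The endpoints of the edges of the generalized Petersen graph `P(n,k)`: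
`x_i = v_i v_{i+1}`, `y_i = v_i u_i`, `z_i = u_i u_{i+k}` (outer vertices `v`
in the left summand, inner vertices `u` in the right summand). -/
def petersenEnds (n k : ℕ) :
    ZMod n ⊕ ZMod n ⊕ ZMod n → (ZMod n ⊕ ZMod n) × (ZMod n ⊕ ZMod n)
  | .inl i => (.inl i, .inl (i + 1))
  | .inr (.inl i) => (.inl i, .inr i)
  | .inr (.inr i) => (.inr i, .inr (i + (k : ZMod n)))

/-- The line graph of `P(n,k)`. -/
def LP (n k : ℕ) : SimpleGraph (ZMod n ⊕ ZMod n ⊕ ZMod n) :=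
  lineOf (petersenEnds n k)

section Square

variable {V : Type*} {G : SimpleGraph V}

theorem isClique_square_insert_neighborSet (w : V) :
    (square G).IsClique (insert w (G.neighborSet w)) := by
  rintro u (rfl | hu) v (rfl | hv) huv
  · exact absurd rfl huv
  · exact ⟨huv, .inl hv⟩
  · exact ⟨huv, .inl hu.symm⟩
  · exact ⟨huv, .inr ⟨w, hu.symm, hv⟩⟩

theorem exists_mem_insert_neighborSet_of_square_adj {u v : V} (h : (square G).Adj u v) :
    ∃ w, u ∈ insert w (G.neighborSet w) ∧ v ∈ insert w (G.neighborSet w) := by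
  obtain ⟨-, huv | ⟨w, huw, hwv⟩⟩ := h
  · exact ⟨u, .inl rfl, .inr huv⟩
  · exact ⟨w, .inr huw.symm, .inr hwv⟩

theorem ne_of_square_adj_of_injOn {α : Type*} {c : V → α}
    (hc : ∀ w, Set.InjOn c (insert w (G.neighborSet w))) {u v : V}
    (h : (square G).Adj u v) : c u ≠ c v := by
  obtain ⟨w, hu, hv⟩ := exists_mem_insert_neighborSet_of_square_adj h
  exact (hc w).ne hu hv h.ne

end Square

section Petersen

variable {n : ℕ}

theorem LP_neighborSet_inl_subset (k : ℕ) (i : ZMod n) :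
    (LP n k).neighborSet (.inl i) ⊆
      {.inl (i - 1), .inl (i + 1), .inr (.inl i), .inr (.inl (i + 1))} := by
  rintro (j | j | j) ⟨hne, h⟩ <;> grind [petersenEnds]

theorem LP_neighborSet_inr_inl_subset (k : ℕ) (i : ZMod n) :
    (LP n k).neighborSet (.inr (.inl i)) ⊆
      {.inl (i - 1), .inl i, .inr (.inr (i - k)), .inr (.inr i)} := by
  rintro (j | j | j) ⟨hne, h⟩ <;> grind [petersenEnds]

theorem LP_neighborSet_inr_inr_subset (k : ℕ) (i : ZMod n) :
    (LP n k).neighborSet (.inr (.inr i)) ⊆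
      {.inr (.inl i), .inr (.inl (i + k)), .inr (.inr (i - k)), .inr (.inr (i + k))} := by
  rintro (j | j | j) ⟨hne, h⟩ <;> grind [petersenEnds]

def petersenColoring (h5 : 5 ∣ n) : ZMod n ⊕ ZMod n ⊕ ZMod n → ZMod 5
  | .inl i => ZMod.castHom h5 (ZMod 5) i
  | .inr (.inl i) => ZMod.castHom h5 (ZMod 5) i - 3
  | .inr (.inr i) => ZMod.castHom h5 (ZMod 5) i - 4

theorem petersenColoring_injOn_insert_neighborSet (h5 : 5 ∣ n) (g : ZMod n ⊕ ZMod n ⊕ ZMod n) :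
    Set.InjOn (petersenColoring h5) (insert g ((LP n 3).neighborSet g)) := by
  rcases g with i | i | i <;>
    [refine .mono (Set.insert_subset_insert (LP_neighborSet_inl_subset 3 i)) ?_;
     refine .mono (Set.insert_subset_insert (LP_neighborSet_inr_inl_subset 3 i)) ?_;
     refine .mono (Set.insert_subset_insert (LP_neighborSet_inr_inr_subset 3 i)) ?_]
  all_goals
    simp only [Set.injOn_iff_pairwise_ne, Set.pairwise_insert, Set.pairwise_singleton,
      Set.mem_insert_iff, Set.mem_singleton_iff, forall_eq_or_imp, forall_eq, true_and]
    and_intros <;> intro <;>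
      simp only [petersenColoring, map_add, map_sub, map_one, Nat.cast_ofNat, map_ofNat] <;>
      generalize ZMod.castHom h5 (ZMod 5) i = t <;> revert t <;> decide

theorem five_le_chromaticNumber_square_LP (h5 : 5 ∣ n) :
    5 ≤ (square (LP n 3)).chromaticNumber := by
  let f : Fin 5 → ZMod n ⊕ ZMod n ⊕ ZMod n :=
    ![.inl (-1), .inl 0, .inl 1, .inr (.inl 0), .inr (.inl 1)]
  have hf : Function.Injective f := by
    refine Function.Injective.of_comp (f := petersenColoring h5) ?_
    have : petersenColoring h5 ∘ f = ![-1, 0, 1, 0 - 3, 1 - 3] := by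
      ext k
      fin_cases k <;> simp [f, petersenColoring, map_neg, map_one, map_zero]
    rw [this]
    decide
  have hmem : ∀ k, f k ∈ insert (f 1) ((LP n 3).neighborSet (f 1)) := by
    intro k
    fin_cases k
    all_goals first
      | exact .inl rfl
      | exact .inr ⟨hf.ne (by decide), by simp [f, petersenEnds]⟩
  refine le_chromaticNumber_of_pairwise_adj (by simp) f fun i j hij => ?_
  exact isClique_square_insert_neighborSet _ (hmem i) (hmem j) (hf.ne hij)

end Petersen

theorem stmt9_general (n : ℕ) (h5 : (5 : ℕ) ∣ n) :
    (square (LP n 3)).chromaticNumber = 5 ∧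
    (∀ ⦃a b⦄, (square (LP n 3)).Adj a b →
      (fun e => match e with
        | Sum.inl i => ZMod.castHom h5 (ZMod 5) i
        | Sum.inr (Sum.inl i) => ZMod.castHom h5 (ZMod 5) i - 3
        | Sum.inr (Sum.inr i) => ZMod.castHom h5 (ZMod 5) i - 4) a ≠
      (fun e => match e with
        | Sum.inl i => ZMod.castHom h5 (ZMod 5) i
        | Sum.inr (Sum.inl i) => ZMod.castHom h5 (ZMod 5) i - 3
        | Sum.inr (Sum.inr i) => ZMod.castHom h5 (ZMod 5) i - 4) b) := by
  have hproper : ∀ ⦃a b⦄, (square (LP n 3)).Adj a b →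
      petersenColoring h5 a ≠ petersenColoring h5 b :=
    fun _ _ => ne_of_square_adj_of_injOn (petersenColoring_injOn_insert_neighborSet h5)
  refine ⟨le_antisymm ?_ (five_le_chromaticNumber_square_LP h5), hproper⟩
  exact (Coloring.mk (petersenColoring h5) fun h => hproper h).colorable.chromaticNumber_le

/-- For `5 ∣ n`, the square of the line graph of `P(n,3)` has chromatic number 5,
witnessed by coloring `x_i`, `y_{i+3}`, `z_{i+4}` with color `r ≡ i (mod 5)`. -/
theorem stmt9 (n : ℕ) (hn : 0 < n) (h5 : (5 : ℕ) ∣ n) :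
    (square (LP n 3)).chromaticNumber = 5 ∧
    (∀ ⦃a b⦄, (square (LP n 3)).Adj a b →
      (fun e => match e with
        | Sum.inl i => ZMod.castHom h5 (ZMod 5) i
        | Sum.inr (Sum.inl i) => ZMod.castHom h5 (ZMod 5) i - 3
        | Sum.inr (Sum.inr i) => ZMod.castHom h5 (ZMod 5) i - 4) a ≠
      (fun e => match e with
        | Sum.inl i => ZMod.castHom h5 (ZMod 5) i
        | Sum.inr (Sum.inl i) => ZMod.castHom h5 (ZMod 5) i - 3
        | Sum.inr (Sum.inr i) => ZMod.castHom h5 (ZMod 5) i - 4) b) :=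
  stmt9_general n h5
end

section
/- For every integer k ≥ 3 there exists a (2k−2)-regular graph G with chromatic number χ(G) = k = (1/2)Δ(G) + 1 which is not k-choosable, i.e., χ_ℓ(G) > χ(G). -/
/-!
Write `X, X', Y', Y` for the four parts and let every list be drawn from a palette of `k + 1`
colours `*, 0, …, k - 1`: vertices of `X ∪ Y` get all colours but `*`, and `x'ᵢ, y'ᵢ` get
all colours but `i`. In a proper colouring from these lists the clique `X` misses exactly one
colour `a ≠ *` of its list, so every `x'ᵢ`, being adjacent to all of `X`, is coloured `*` or `a`,
and `x'ₐ` is coloured `*`; likewise with some `b` on the `Y` side. If `a ≠ b` then `x'ₐ` and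
`y'_b` are adjacent and both coloured `*`. If `a = b`, pick `i ≠ j` both different from `a`
(possible as `k ≥ 3`): `x'ᵢ` cannot be `*` because of `y'ₐ`, so it is `a`, and likewise `y'ⱼ`
is `a`, a clash.
-/

open SimpleGraph

/-- `G` is `k`-choosable: for every assignment of lists of size `k` there is a
proper coloring choosing each vertex's color from its list. -/
def Choosable {V : Type*} (G : SimpleGraph V) (k : ℕ) : Prop :=
  ∀ L : V → Finset ℤ, (∀ v, (L v).card = k) →
    ∃ c : V → ℤ, (∀ v, c v ∈ L v) ∧ ∀ ⦃u v⦄, G.Adj u v → c u ≠ c v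

open Finset

lemma not_choosable_of_forall_not_proper {V α : Type*} [Countable α] {G : SimpleGraph V}
    {k : ℕ} (L : V → Finset α) (hL : ∀ v, (L v).card = k)
    (h : ∀ c : V → α, (∀ v, c v ∈ L v) → ¬ ∀ ⦃u v⦄, G.Adj u v → c u ≠ c v) :
    ¬ Choosable G k := by
  intro hG
  obtain ⟨f, hf⟩ := Countable.exists_injective_nat α
  let e : α ↪ ℤ := ⟨fun a => f a, Nat.cast_injective.comp hf⟩
  obtain ⟨c, hcL, hc⟩ := hG (fun v => (L v).map e) (by simp [hL])
  choose c' hc'L hc' using fun v => mem_map.1 (hcL v)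
  refine h c' hc'L fun u v huv heq => hc huv ?_
  rw [← hc' u, ← hc' v, heq]

lemma Finset.exists_compl_eq_pair {α : Type*} [Fintype α] [DecidableEq α] {s : Finset α}
    (hs : #s + 2 = Fintype.card α) {o : α} (ho : o ∉ s) : ∃ x ≠ o, sᶜ = {o, x} := by
  obtain ⟨x, y, hxy, hsc⟩ := card_eq_two.1 (by rw [card_compl]; omega : #sᶜ = 2)
  have : o = x ∨ o = y := by simpa [hsc] using mem_compl.2 ho
  rcases this with rfl | rfl
  · exact ⟨y, hxy.symm, hsc⟩
  · exact ⟨x, hxy, hsc.trans (pair_comm _ _)⟩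

lemma exists_ne_and_eq_of_forall_eq_none_or_eq_some {ι : Type*} [Fintype ι]
    (hι : 2 < Fintype.card ι) {p q : ι → Option ι} {a b : ι}
    (hpa : p a = none) (hp : ∀ i, p i = none ∨ p i = some a)
    (hqb : q b = none) (hq : ∀ j, q j = none ∨ q j = some b) :
    ∃ i j, i ≠ j ∧ p i = q j := by
  classical
  obtain hab | rfl := ne_or_eq a b
  · exact ⟨a, b, hab, hpa.trans hqb.symm⟩
  have : 1 < #(univ.erase a) := by rw [card_erase_of_mem (mem_univ a), card_univ]; omega
  obtain ⟨i, hi, j, hj, hij⟩ := one_lt_card.1 this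
  rw [mem_erase] at hi hj
  rcases hp i with hpi | hpi
  · exact ⟨i, a, hi.1, hpi.trans hqb.symm⟩
  rcases hq j with hqj | hqj
  · exact ⟨a, j, hj.1.symm, hpa.trans hqj.symm⟩
  · exact ⟨i, j, hij, hpi.trans hqj.symm⟩

def completeSplitGraph (m n : ℕ) : SimpleGraph (Fin m ⊕ Fin n) :=
  fromRel fun u _ => u.isLeft

namespace completeSplitGraph
variable {m n : ℕ}

@[simp] lemma adj_inl_inl {i j : Fin m} :
    (completeSplitGraph m n).Adj (.inl i) (.inl j) ↔ i ≠ j := by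
  simp [completeSplitGraph]

@[simp] lemma adj_inl_inr {i : Fin m} {j : Fin n} :
    (completeSplitGraph m n).Adj (.inl i) (.inr j) := by
  simp [completeSplitGraph]

@[simp] lemma adj_inr_inl {i : Fin n} {j : Fin m} :
    (completeSplitGraph m n).Adj (.inr i) (.inl j) := by
  simp [completeSplitGraph]

@[simp] lemma not_adj_inr_inr {i j : Fin n} :
    ¬ (completeSplitGraph m n).Adj (.inr i) (.inr j) := by
  simp [completeSplitGraph]

def homOfTop (j : Fin n) : (⊤ : SimpleGraph (Option (Fin m))) →g completeSplitGraph m n where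
  toFun o := o.elim (.inr j) .inl
  map_rel' := by rintro (_ | a) (_ | b) h <;> simp_all

lemma exists_ne_forall_inr_eq_or_eq {α : Type*} [Fintype α] [DecidableEq α]
    (hα : Fintype.card α = m + 2) (c : Fin m ⊕ Fin n → α)
    (hc : ∀ ⦃u v⦄, (completeSplitGraph m n).Adj u v → c u ≠ c v) {o : α}
    (ho : ∀ i, c (.inl i) ≠ o) : ∃ x ≠ o, ∀ j, c (.inr j) = o ∨ c (.inr j) = x := by
  set s := univ.image (c ∘ .inl)
  have hinj : Function.Injective (c ∘ .inl) := fun i i' h =>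
    by_contra fun hne => hc (adj_inl_inl.2 hne) h
  have hs : #s = m := by rw [card_image_of_injective _ hinj, card_univ, Fintype.card_fin]
  obtain ⟨x, hxo, hsc⟩ := exists_compl_eq_pair (s := s) (by omega) (by simpa [s] using ho)
  refine ⟨x, hxo, fun j => ?_⟩
  have : c (.inr j) ∈ sᶜ := by simpa [s] using fun i => (hc adj_inr_inl).symm
  simpa [hsc] using this

/-- Colour `some i` plays the role of colour `i` of the paper and `none` that of the extra colour
`*`. -/
def lists : Fin m ⊕ Fin (m + 1) → Finset (Option (Fin (m + 1))) :=
  Sum.elim (fun _ => univ.erase none) fun i => univ.erase (some i)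

lemma exists_forall_inr_eq_none_or_eq_some {c : Fin m ⊕ Fin (m + 1) → Option (Fin (m + 1))}
    (hc : ∀ ⦃u v⦄, (completeSplitGraph m (m + 1)).Adj u v → c u ≠ c v)
    (hcL : ∀ u, c u ∈ lists u) :
    ∃ a, c (.inr a) = none ∧ ∀ j, c (.inr j) = none ∨ c (.inr j) = some a := by
  obtain ⟨x, hx, hcx⟩ := exists_ne_forall_inr_eq_or_eq (by simp) c hc (o := none)
    fun i => by simpa [lists] using hcL (.inl i)
  obtain ⟨a, rfl⟩ := Option.ne_none_iff_exists'.1 hx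
  have hca : c (.inr a) ≠ some a := by simpa [lists] using hcL (.inr a)
  exact ⟨a, (hcx a).resolve_right hca, hcx⟩

end completeSplitGraph

/-- `inl (inl i)`, `inl (inr i)`, `inr (inr i)`, `inr (inl i)` are the paper's
`xᵢ, x'ᵢ, y'ᵢ, yᵢ`. -/
def splitCrownGraph (m n : ℕ) : SimpleGraph ((Fin m ⊕ Fin n) ⊕ (Fin m ⊕ Fin n)) :=
  (completeSplitGraph m n ⊕g completeSplitGraph m n) ⊔
    fromRel fun
      | .inl (.inr i), .inr (.inr j) => i ≠ j
      | _, _ => False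

namespace splitCrownGraph
variable {m n : ℕ}

lemma ncard_neighborSet (v : (Fin m ⊕ Fin n) ⊕ (Fin m ⊕ Fin n)) :
    ((splitCrownGraph m n).neighborSet v).ncard = m + n - 1 := by
  classical
  rw [Set.ncard_eq_toFinset_card', ← neighborFinset_def, neighborFinset_eq_filter, card_filter,
    Fintype.sum_sum_type, Fintype.sum_sum_type, Fintype.sum_sum_type]
  rcases v with (i | i) | (i | i) <;>
    simp [splitCrownGraph, sum_ite, filter_ne, filter_ne'] <;> have := i.pos <;> omega

lemma colorable (hm : 0 < m) : (splitCrownGraph m n).Colorable (m + 1) := by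
  refine ⟨Coloring.mk (Sum.elim (Sum.elim Fin.castSucc fun _ => Fin.last m)
    (Sum.elim Fin.succ fun _ => 0)) ?_⟩
  rintro ((i | i) | (i | i)) ((j | j) | (j | j)) h <;>
    simp_all [splitCrownGraph, Fin.ext_iff] <;> omega

lemma chromaticNumber (hm : 0 < m) (hn : 0 < n) :
    (splitCrownGraph m n).chromaticNumber = m + 1 := by
  refine le_antisymm (colorable hm).chromaticNumber_le ?_
  let f : completeSplitGraph m n →g splitCrownGraph m n :=
    (Hom.ofLE le_sup_left).comp Embedding.sumInl.toHom
  have := chromaticNumber_mono_of_hom (f.comp (completeSplitGraph.homOfTop ⟨0, hn⟩))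
  simpa using this

open completeSplitGraph in
lemma not_choosable (hm : 2 ≤ m) : ¬ Choosable (splitCrownGraph m (m + 1)) (m + 1) := by
  refine not_choosable_of_forall_not_proper (Sum.elim lists lists)
    (by rintro ((_ | _) | (_ | _)) <;> simp [lists]) fun c hcL hc => ?_
  obtain ⟨a, hca, hcX'⟩ := exists_forall_inr_eq_none_or_eq_some (c := c ∘ .inl)
    (fun u v huv => hc (by simpa [splitCrownGraph] using huv)) (fun u => hcL (.inl u))
  obtain ⟨b, hcb, hcY'⟩ := exists_forall_inr_eq_none_or_eq_some (c := c ∘ .inr)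
    (fun u v huv => hc (by simpa [splitCrownGraph] using huv)) (fun u => hcL (.inr u))
  obtain ⟨i, j, hij, heq⟩ := exists_ne_and_eq_of_forall_eq_none_or_eq_some (by simp; omega)
    hca hcX' hcb hcY'
  exact hc (by simpa [splitCrownGraph] using hij) heq

end splitCrownGraph

/-- For every `k ≥ 3` there is a `(2k-2)`-regular graph with chromatic number
`k = Δ/2 + 1` which is not `k`-choosable. -/
theorem stmt12 (k : ℕ) (hk : 3 ≤ k) :
    ∃ (V : Type) (_ : Fintype V) (G : SimpleGraph V),
      (∀ v : V, (G.neighborSet v).ncard = 2 * k - 2) ∧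
      G.chromaticNumber = k ∧ ¬ Choosable G k := by
  obtain ⟨m, rfl⟩ : ∃ m, k = m + 1 := ⟨k - 1, by omega⟩
  refine ⟨_, inferInstance, splitCrownGraph m (m + 1), fun v => ?_,
    by exact_mod_cast splitCrownGraph.chromaticNumber (by omega) (by omega),
    splitCrownGraph.not_choosable (by omega)⟩
  rw [splitCrownGraph.ncard_neighborSet]
  omega
end

section
/- Let G be a bipartite graph, D an orientation of G, and L a list assignment with |L(v)| ≥ d⁺_D(v) + 1 for every vertex v, where d⁺_D(v) is the out-degree of v in D. Then G admits a proper L-coloring. -/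
open SimpleGraph Finset

section

variable {V K : Type*}

def IsKernel (G : SimpleGraph V) (D : V → V → Prop) (A S : Finset V) : Prop :=
  S ⊆ A ∧ G.IsIndepSet (S : Set V) ∧ ∀ v ∈ A, v ∉ S → ∃ u ∈ S, D v u

variable {G : SimpleGraph V} {D : V → V → Prop}

lemma IsKernel.nonempty {A S : Finset V} (hS : IsKernel G D A S) (hA : A.Nonempty) :
    S.Nonempty := by
  obtain ⟨v, hv⟩ := hA
  by_cases hvS : v ∈ S
  · exact ⟨v, hvS⟩
  · obtain ⟨u, hu, -⟩ := hS.2.2 v hv hvS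
    exact ⟨u, hu⟩

/-- Writing `X`, `Y` for the two colour classes inside `A`, let `B P` be the vertices of `Y` with
no arc into `P` and `F P` the vertices of `X` with no arc into `B P`. `F` is monotone, and for a
fixed point `P = F P` the set `P ∪ B P` is a kernel: a vertex of `X \ P` has an arc into `B P`,
one of `Y \ B P` an arc into `P`, and an edge between `P` and `B P` could be oriented in neither
direction. -/
theorem exists_isKernel_of_coloring_fin_two (C : G.Coloring (Fin 2))
    (hD : ∀ u v, G.Adj u v → D u v ∨ D v u) (A : Finset V) : ∃ S, IsKernel G D A S := by
  classical
  let B : Set V → Set V := fun P => {y | y ∈ A ∧ C y = 1 ∧ ∀ x ∈ P, ¬ D y x}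
  have hB : Antitone B := fun P Q hPQ y ⟨hyA, hy1, hy⟩ =>
    ⟨hyA, hy1, fun x hx => hy x (hPQ hx)⟩
  let F : Set V →o Set V :=
    ⟨fun P => {x | x ∈ A ∧ C x = 0 ∧ ∀ y ∈ B P, ¬ D x y},
      fun P Q hPQ x ⟨hxA, hx0, hx⟩ => ⟨hxA, hx0, fun y hy => hx y (hB hPQ hy)⟩⟩
  set P := OrderHom.lfp F
  have hP : ∀ x, x ∈ P ↔ x ∈ A ∧ C x = 0 ∧ ∀ y ∈ B P, ¬ D x y :=
    fun x => (Set.ext_iff.1 (OrderHom.map_lfp F) x).symm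
  have hBP : ∀ y, y ∈ B P ↔ y ∈ A ∧ C y = 1 ∧ ∀ x ∈ P, ¬ D y x := fun _ => Iff.rfl
  have hcross : ∀ x ∈ P, ∀ y ∈ B P, ¬ G.Adj x y := fun x hx y hy hxy =>
    (hD x y hxy).elim (((hP x).1 hx).2.2 y hy) (((hBP y).1 hy).2.2 x hx)
  refine ⟨A.filter (· ∈ P ∪ B P), filter_subset _ _, ?_, ?_⟩
  · rintro u hu v hv - huv
    rcases (mem_filter.1 hu).2 with hu | hu <;> rcases (mem_filter.1 hv).2 with hv | hv
    · exact C.valid huv (((hP u).1 hu).2.1.trans ((hP v).1 hv).2.1.symm)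
    · exact hcross u hu v hv huv
    · exact hcross v hv u hu huv.symm
    · exact C.valid huv (((hBP u).1 hu).2.1.trans ((hBP v).1 hv).2.1.symm)
  · intro v hvA hvS
    simp only [mem_filter, hvA, true_and, Set.mem_union, not_or] at hvS
    obtain hv | hv : C v = 0 ∨ C v = 1 := by omega
    · obtain ⟨y, hy, hvy⟩ : ∃ y ∈ B P, D v y := by
        by_contra! h
        exact hvS.1 ((hP v).2 ⟨hvA, hv, h⟩)
      exact ⟨y, mem_filter.2 ⟨((hBP y).1 hy).1, .inr hy⟩, hvy⟩
    · obtain ⟨x, hx, hvx⟩ : ∃ x ∈ P, D v x := by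
        by_contra! h
        exact hvS.2 ((hBP v).2 ⟨hvA, hv, h⟩)
      exact ⟨x, mem_filter.2 ⟨((hP x).1 hx).1, .inl hx⟩, hvx⟩

section ListColoring

variable [DecidableEq V] [DecidableRel D] [DecidableEq K]

lemma card_filter_sdiff_lt_card_erase {W S : Finset V} {L : V → Finset K} {a : K}
    (hS : IsKernel G D (W.filter (a ∈ L ·)) S) (hL : ∀ v ∈ W, #(W.filter (D v ·)) < #(L v))
    {v : V} (hv : v ∈ W \ S) :
    #((W \ S).filter (D v ·)) < #((L v).erase a) := by
  obtain ⟨hvW, hvS⟩ := mem_sdiff.1 hv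
  have hsub : (W \ S).filter (D v ·) ⊆ W.filter (D v ·) := filter_subset_filter _ sdiff_subset
  by_cases ha : a ∈ L v
  · obtain ⟨u, huS, hvu⟩ := hS.2.2 v (mem_filter.2 ⟨hvW, ha⟩) hvS
    have hlt : #((W \ S).filter (D v ·)) < #(W.filter (D v ·)) :=
      card_lt_card <| (ssubset_iff_of_subset hsub).2 ⟨u,
        mem_filter.2 ⟨(mem_filter.1 (hS.1 huS)).1, hvu⟩,
        fun h => (mem_sdiff.1 (mem_filter.1 h).1).2 huS⟩
    rw [card_erase_of_mem ha]
    have := hL v hvW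
    omega
  · rw [erase_eq_of_notMem ha]
    exact (card_le_card hsub).trans_lt (hL v hvW)

/-- Colour a kernel of the vertices whose lists contain `a` with `a`, delete `a` from the
remaining lists and recurse: every remaining vertex either loses `a` from its list or an
out-neighbour. -/
theorem exists_listColoring_of_isKernel [Nonempty K] (hK : ∀ A, ∃ S, IsKernel G D A S)
    (W : Finset V) (L : V → Finset K) (hL : ∀ v ∈ W, #(W.filter (D v ·)) < #(L v)) :
    ∃ c : V → K, (∀ v ∈ W, c v ∈ L v) ∧ ∀ u ∈ W, ∀ v ∈ W, G.Adj u v → c u ≠ c v := by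
  induction W using Finset.strongInduction generalizing L with
  | H W ih =>
  rcases W.eq_empty_or_nonempty with rfl | ⟨v₀, hv₀⟩
  · exact ⟨fun _ => Classical.arbitrary K, by simp, by simp⟩
  obtain ⟨a, ha⟩ := card_pos.1 ((Nat.zero_le _).trans_lt (hL v₀ hv₀))
  obtain ⟨S, hS⟩ := hK (W.filter (a ∈ L ·))
  have hSW : S ⊆ W := hS.1.trans (filter_subset _ _)
  obtain ⟨c, hcL, hc⟩ := ih (W \ S) (sdiff_ssubset hSW (hS.nonempty ⟨v₀, mem_filter.2 ⟨hv₀, ha⟩⟩))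
    (fun v => (L v).erase a) fun v hv => card_filter_sdiff_lt_card_erase hS hL hv
  have hca : ∀ w ∈ W, w ∉ S → c w ≠ a := fun w hw hwS =>
    ne_of_mem_erase (hcL w (mem_sdiff.2 ⟨hw, hwS⟩))
  refine ⟨fun v => if v ∈ S then a else c v, fun v hv => ?_, fun u hu v hv huv => ?_⟩
  · dsimp only
    split_ifs with hvS
    · exact (mem_filter.1 (hS.1 hvS)).2
    · exact mem_of_mem_erase (hcL v (mem_sdiff.2 ⟨hv, hvS⟩))
  · by_cases huS : u ∈ S <;> by_cases hvS : v ∈ S <;> simp only [huS, hvS, if_true, if_false]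
    · exact absurd huv (hS.2.1 huS hvS (G.ne_of_adj huv))
    · exact (hca v hv hvS).symm
    · exact hca u hu huS
    · exact hc u (mem_sdiff.2 ⟨hu, huS⟩) v (mem_sdiff.2 ⟨hv, hvS⟩) huv

end ListColoring

end

theorem stmt13_general {V : Type*} [Fintype V] (G : SimpleGraph V)
    (hbip : G.Colorable 2)
    (D : V → V → Prop) [DecidableRel D]
    (hD2 : ∀ u v, G.Adj u v → (D u v ↔ ¬ D v u))
    (L : V → Finset ℤ)
    (hL : ∀ v, (Finset.univ.filter fun u => D v u).card + 1 ≤ (L v).card) :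
    ∃ c : V → ℤ, (∀ v, c v ∈ L v) ∧ ∀ ⦃u v⦄, G.Adj u v → c u ≠ c v := by
  classical
  obtain ⟨C⟩ := hbip
  have hK := exists_isKernel_of_coloring_fin_two C (D := D) fun u v huv =>
    (em (D u v)).imp_right (hD2 v u huv.symm).2
  obtain ⟨c, hcL, hc⟩ := exists_listColoring_of_isKernel hK univ L fun v _ => hL v
  exact ⟨c, fun v => hcL v (mem_univ v), fun u v huv => hc u (mem_univ u) v (mem_univ v) huv⟩

/-- Alon–Tarsi theorem for bipartite graphs: if `D` is an orientation of a
bipartite graph `G` and each list satisfies `|L(v)| ≥ d⁺_D(v) + 1`, then `G`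
admits a proper coloring from the lists. -/
theorem stmt13 {V : Type*} [Fintype V] (G : SimpleGraph V)
    (hbip : G.Colorable 2)
    (D : V → V → Prop) [DecidableRel D]
    (hD1 : ∀ u v, D u v → G.Adj u v)
    (hD2 : ∀ u v, G.Adj u v → (D u v ↔ ¬ D v u))
    (L : V → Finset ℤ)
    (hL : ∀ v, (Finset.univ.filter fun u => D v u).card + 1 ≤ (L v).card) :
    ∃ c : V → ℤ, (∀ v, c v ∈ L v) ∧ ∀ ⦃u v⦄, G.Adj u v → c u ≠ c v :=
  stmt13_general G hbip D hD2 L hL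
end

section
/- Let G be a bipartite graph and L a list assignment with |L(v)| ≥ ⌈d_G(v)/2⌉ + 1 for every vertex v. Then G admits a proper L-coloring. Moreover, for any single distinguished vertex z, the weaker condition |L(z)| ≥ ⌊d_G(z)/2⌋ + 1 suffices at z (keeping the original condition at all other vertices). -/
/-!
Orient the edges of `G` so that every out-degree is at most `⌈d(v)/2⌉`, and at most `⌊d(v)/2⌋`
at `z` (remove an edge at `z`, orient the rest by induction with its other end distinguished,
and point the removed edge towards `z`). A bipartite digraph has a kernel in every induced
subdigraph, and in such a digraph lists longer than the out-degrees can always be coloured: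
pick a colour `a`, colour a kernel of the vertices whose lists contain `a` with `a`, delete `a`
from the remaining lists and recurse; every vertex that lost `a` also lost an out-neighbour.
This replaces the Alon–Tarsi theorem by the kernel method of Bondy–Boppana–Siegel.
-/

open SimpleGraph Finset

namespace Digraph

variable {V : Type*} (D : Digraph V)

structure IsKernelOn (U K : Set V) : Prop where
  subset : K ⊆ U
  independent : ∀ ⦃u⦄, u ∈ K → ∀ ⦃w⦄, w ∈ K → ¬ D.Adj u w
  absorbing : ∀ ⦃v⦄, v ∈ U → v ∉ K → ∃ w ∈ K, D.Adj v w

theorem exists_isKernelOn_of_bipartite (A : Set V) (hA : ∀ ⦃u w⦄, D.Adj u w → (u ∈ A ↔ w ∉ A))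
    (U : Set V) : ∃ K, D.IsKernelOn U K := by
  -- Any fixed point `KA` of `F` does: add the vertices of `U \ A` with no arc into `KA`.
  let F : Set V →o Set V :=
    ⟨fun S => {a | a ∈ U ∧ a ∈ A ∧ ∀ w ∈ U, D.Adj a w → ∃ a' ∈ S, D.Adj w a'},
      fun S T hST a ⟨haU, haA, h⟩ => ⟨haU, haA, fun w hw hD =>
        let ⟨a', ha', hw'⟩ := h w hw hD; ⟨a', hST ha', hw'⟩⟩⟩
  set KA := OrderHom.lfp F
  have hKA : ∀ a, a ∈ KA ↔ a ∈ U ∧ a ∈ A ∧ ∀ w ∈ U, D.Adj a w → ∃ a' ∈ KA, D.Adj w a' :=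
    fun a => (Set.ext_iff.mp (OrderHom.map_lfp F) a).symm
  set KB : Set V := {w | w ∈ U ∧ w ∉ A ∧ ∀ a ∈ KA, ¬ D.Adj w a}
  refine ⟨KA ∪ KB, ?_, ?_, ?_⟩
  · rintro v (hv | hv)
    exacts [((hKA v).1 hv).1, hv.1]
  · rintro u (hu | hu) w (hw | hw) huw
    · exact (hA huw).1 ((hKA u).1 hu).2.1 ((hKA w).1 hw).2.1
    · obtain ⟨a, ha, hwa⟩ := ((hKA u).1 hu).2.2 w hw.1 huw
      exact hw.2.2 a ha hwa
    · exact hu.2.2 w hw huw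
    · exact hu.2.1 ((hA huw).2 hw.2.1)
  · intro v hvU hvK
    by_cases hvA : v ∈ A
    · obtain ⟨w, hwU, hvw, hw⟩ : ∃ w ∈ U, D.Adj v w ∧ ∀ a ∈ KA, ¬ D.Adj w a := by
        by_contra! h
        exact hvK (Or.inl ((hKA v).2 ⟨hvU, hvA, h⟩))
      exact ⟨w, Or.inr ⟨hwU, (hA hvw).1 hvA, hw⟩, hvw⟩
    · obtain ⟨a, ha, hva⟩ : ∃ a ∈ KA, D.Adj v a := by
        by_contra! h
        exact hvK (Or.inr ⟨hvU, hvA, h⟩)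
      exact ⟨a, Or.inl ha, hva⟩

theorem exists_listColoring_of_outdegree_lt [DecidableRel D.Adj] {α : Type*} [DecidableEq α]
    [Nonempty α] (hD : ∀ U, ∃ K, D.IsKernelOn U K) (S : Finset V) (L : V → Finset α)
    (hL : ∀ v ∈ S, #{w ∈ S | D.Adj v w} < #(L v)) :
    ∃ c : V → α, (∀ v ∈ S, c v ∈ L v) ∧ ∀ u ∈ S, ∀ w ∈ S, D.Adj u w → c u ≠ c w := by
  classical
  induction S using Finset.strongInduction generalizing L with
  | H S ih =>
  obtain rfl | ⟨v₀, hv₀⟩ := S.eq_empty_or_nonempty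
  · exact ⟨fun _ => Classical.arbitrary α, by simp, by simp⟩
  obtain ⟨a, ha⟩ := card_pos.mp ((Nat.zero_le _).trans_lt (hL v₀ hv₀))
  obtain ⟨K, hK⟩ := hD {v | v ∈ S ∧ a ∈ L v}
  have hKS : ∀ v ∈ K, v ∈ S := fun v hv => (hK.subset hv).1
  have hS' : {v ∈ S | v ∉ K} ⊂ S := by
    rw [filter_ssubset]
    by_cases hv₀K : v₀ ∈ K
    · exact ⟨v₀, hv₀, not_not.mpr hv₀K⟩
    · obtain ⟨w, hwK, -⟩ := hK.absorbing ⟨hv₀, ha⟩ hv₀K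
      exact ⟨w, hKS w hwK, not_not.mpr hwK⟩
  obtain ⟨c, hcL, hc⟩ := ih _ hS' (fun v => (L v).erase a) fun v hv => by
    obtain ⟨hvS, hvK⟩ := mem_filter.mp hv
    have hsub : {w ∈ {v ∈ S | v ∉ K} | D.Adj v w} ⊆ {w ∈ S | D.Adj v w} :=
      filter_subset_filter _ (filter_subset _ _)
    by_cases hav : a ∈ L v
    · -- `v` loses the colour `a`, but also an out-neighbour in the kernel
      obtain ⟨w, hwK, hvw⟩ := hK.absorbing ⟨hvS, hav⟩ hvK
      have hlt := card_lt_card <| (ssubset_iff_of_subset hsub).mpr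
        ⟨w, mem_filter.mpr ⟨hKS w hwK, hvw⟩, by simp [hwK]⟩
      have := hL v hvS
      rw [card_erase_of_mem hav]
      omega
    · rw [erase_eq_of_notMem hav]
      exact (card_le_card hsub).trans_lt (hL v hvS)
  refine ⟨fun v => if v ∈ K then a else c v, fun v hv => ?_, fun u hu w hw huw => ?_⟩
  · by_cases hvK : v ∈ K
    · simpa [hvK] using (hK.subset hvK).2
    · simpa [hvK] using mem_of_mem_erase (hcL v (by simp [hv, hvK]))
  · by_cases huK : u ∈ K <;> by_cases hwK : w ∈ K <;> simp only [huK, hwK, if_true, if_false]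
    · exact absurd huw (hK.independent huK hwK)
    · exact (ne_of_mem_erase (hcL w (by simp [hw, hwK]))).symm
    · exact ne_of_mem_erase (hcL u (by simp [hu, huK]))
    · exact hc u (by simp [hu, huK]) w (by simp [hw, hwK]) huw

end Digraph

theorem Finset.card_filter_eq_card_filter_erase_add {α : Type*} [DecidableEq α] {s : Finset α}
    {x : α} (hx : x ∈ s) (p : α → Prop) [DecidablePred p] :
    #{y ∈ s | p y} = #{y ∈ s.erase x | p y} + if p x then 1 else 0 := by
  conv_lhs => rw [← insert_erase hx]
  rw [filter_insert]
  split_ifs with h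
  · rw [card_insert_of_notMem (by simp)]
  · rfl

/-- An orientation of `E` is given by the tail `t e ∈ e` of each edge, so that
`#{e ∈ E | t e = v}` is the out-degree of `v`. -/
theorem Sym2.exists_balanced_tail {V : Type*} [DecidableEq V] (E : Finset (Sym2 V))
    (hE : ∀ e ∈ E, ¬ e.IsDiag) (z : V) :
    ∃ t : Sym2 V → V, (∀ e, t e ∈ e) ∧
      (∀ v, 2 * #{e ∈ E | t e = v} ≤ #{e ∈ E | v ∈ e} + 1) ∧
      2 * #{e ∈ E | t e = z} ≤ #{e ∈ E | z ∈ e} := by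
  induction E using Finset.strongInduction generalizing z with
  | H E ih =>
  obtain rfl | hEne := E.eq_empty_or_nonempty
  · exact ⟨fun e => e.out.1, Sym2.out_fst_mem, by simp, by simp⟩
  -- orient `E` minus an edge `s(a, b)` at `z` (if any) with `a` distinguished, then `a → b`
  obtain ⟨a, b, habE, hbz⟩ : ∃ a b, s(a, b) ∈ E ∧ (b = z ∨ #{e ∈ E | z ∈ e} = 0) := by
    by_cases hz : ∃ e ∈ E, z ∈ e
    · obtain ⟨e, he, hze⟩ := hz
      obtain ⟨a, rfl⟩ := Sym2.mem_iff_exists.mp hze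
      exact ⟨a, z, Sym2.eq_swap ▸ he, Or.inl rfl⟩
    · obtain ⟨e, he⟩ := hEne
      induction e using Sym2.ind with
      | _ a b => exact ⟨a, b, he, Or.inr (card_eq_zero.mpr (by simpa using hz))⟩
  have hab : a ≠ b := fun h => hE _ habE (Sym2.mk_isDiag_iff.mpr h)
  obtain ⟨t, ht, htbal, hta⟩ := ih (E.erase s(a, b)) (erase_ssubset habE)
    (fun e he => hE e (mem_of_mem_erase he)) a
  set t' := Function.update t s(a, b) a
  have ht' : ∀ e, t' e ∈ e := fun e => by
    by_cases he : e = s(a, b)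
    · simp [t', he]
    · simpa [t', he] using ht e
  have hout : ∀ v,
      #{e ∈ E | t' e = v} = #{e ∈ E.erase s(a, b) | t e = v} + if a = v then 1 else 0 :=
    fun v => by
      rw [Finset.card_filter_eq_card_filter_erase_add habE,
        show t' s(a, b) = a from Function.update_self ..]
      congr 2
      exact filter_congr fun e he => by
        rw [show t' e = t e from Function.update_of_ne (ne_of_mem_erase he) ..]
  have hdeg : ∀ v,
      #{e ∈ E | v ∈ e} = #{e ∈ E.erase s(a, b) | v ∈ e} + if v ∈ s(a, b) then 1 else 0 :=
    fun v => Finset.card_filter_eq_card_filter_erase_add habE _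
  have hbal : ∀ v, 2 * #{e ∈ E | t' e = v} ≤ #{e ∈ E | v ∈ e} + 1 := fun v => by
    have := htbal v
    rw [hout, hdeg]
    by_cases hav : a = v
    · subst hav; simp only [if_true, Sym2.mem_mk_left]; omega
    · simp only [hav, if_false]; split_ifs <;> omega
  refine ⟨t', ht', hbal, ?_⟩
  rcases hbz with rfl | hz
  · have := htbal b
    rw [hout, hdeg, if_neg hab, if_pos (Sym2.mem_mk_right a b)]
    omega
  · have : #{e ∈ E | t' e = z} ≤ #{e ∈ E | z ∈ e} :=
      card_le_card (monotone_filter_right E fun e _ h => h ▸ ht' e)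
    omega

namespace SimpleGraph

variable {V : Type*} [Fintype V] (G : SimpleGraph V) [DecidableRel G.Adj]

theorem card_filter_adj_tail_eq [DecidableEq V] {t : Sym2 V → V} (ht : ∀ e, t e ∈ e) (v : V) :
    #{w | G.Adj v w ∧ t s(v, w) = v} = #{e ∈ G.edgeFinset | t e = v} := by
  refine card_nbij (fun w => s(v, w)) (fun w hw => ?_)
    (fun w _ w' _ h => Sym2.congr_right.mp h) fun e he => ?_
  · obtain ⟨-, hvw, htw⟩ := mem_filter.mp hw
    exact mem_filter.mpr ⟨G.mem_edgeFinset.mpr hvw, htw⟩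
  · obtain ⟨he, hte⟩ := mem_filter.mp he
    obtain ⟨w, rfl⟩ := Sym2.mem_iff_exists.mp (hte ▸ ht e)
    exact ⟨w, mem_filter.mpr ⟨mem_univ _, G.mem_edgeFinset.mp he, hte⟩, rfl⟩

theorem exists_listColoring_of_half_degree_lt_card {α : Type*} [DecidableEq α] [Nonempty α]
    (hbip : G.Colorable 2) (z : V) (L : V → Finset α)
    (hL : ∀ v, v ≠ z → (G.degree v + 1) / 2 + 1 ≤ #(L v)) (hLz : G.degree z / 2 + 1 ≤ #(L z)) :
    ∃ c : V → α, (∀ v, c v ∈ L v) ∧ ∀ ⦃u v⦄, G.Adj u v → c u ≠ c v := by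
  classical
  obtain ⟨C⟩ := hbip
  obtain ⟨t, ht, htbal, htz⟩ := Sym2.exists_balanced_tail G.edgeFinset
    (fun e he => G.not_isDiag_of_mem_edgeSet (G.mem_edgeFinset.mp he)) z
  let D : Digraph V := ⟨fun u w => G.Adj u w ∧ t s(u, w) = u⟩
  have hD : ∀ U, ∃ K, D.IsKernelOn U K := D.exists_isKernelOn_of_bipartite {v | C v = 0}
    fun u w huw => by
      have : ∀ i j : Fin 2, i ≠ j → (i = 0 ↔ j ≠ 0) := by decide
      exact this _ _ (C.valid huw.1)
  have hdeg : ∀ v, #{e ∈ G.edgeFinset | v ∈ e} = G.degree v := fun v => by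
    rw [← incidenceFinset_eq_filter, card_incidenceFinset_eq_degree]
  obtain ⟨c, hcL, hc⟩ := D.exists_listColoring_of_outdegree_lt hD univ L fun v _ => by
    have hout : #{w | D.Adj v w} = #{e ∈ G.edgeFinset | t e = v} := G.card_filter_adj_tail_eq ht v
    have hbal := htbal v
    rw [hdeg] at hbal
    by_cases hvz : v = z
    · subst hvz
      rw [hdeg] at htz
      omega
    · have := hL v hvz
      omega
  refine ⟨c, fun v => hcL v (mem_univ v), fun u w huw => ?_⟩
  rcases Sym2.mem_iff.mp (ht s(u, w)) with h | h
  · exact hc u (mem_univ u) w (mem_univ w) ⟨huw, h⟩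
  · exact (hc w (mem_univ w) u (mem_univ u) ⟨huw.symm, Sym2.eq_swap ▸ h⟩).symm

end SimpleGraph

/-- For a finite bipartite graph `G`: (1) if `|L(v)| ≥ ⌈d(v)/2⌉ + 1` for every
vertex, then `G` is `L`-colorable; (2) moreover, for any distinguished vertex
`z` the weaker bound `|L(z)| ≥ ⌊d(z)/2⌋ + 1` suffices at `z`. -/
theorem stmt14 {V : Type*} [Fintype V] (G : SimpleGraph V)
    [DecidableRel G.Adj] (hbip : G.Colorable 2) :
    (∀ L : V → Finset ℤ, (∀ v, (G.degree v + 1) / 2 + 1 ≤ (L v).card) →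
      ∃ c : V → ℤ, (∀ v, c v ∈ L v) ∧ ∀ ⦃u v⦄, G.Adj u v → c u ≠ c v) ∧
    ∀ (z : V) (L : V → Finset ℤ),
      (∀ v, v ≠ z → (G.degree v + 1) / 2 + 1 ≤ (L v).card) →
      G.degree z / 2 + 1 ≤ (L z).card →
      ∃ c : V → ℤ, (∀ v, c v ∈ L v) ∧ ∀ ⦃u v⦄, G.Adj u v → c u ≠ c v := by
  refine ⟨fun L hL => ?_, G.exists_listColoring_of_half_degree_lt_card hbip⟩
  cases isEmpty_or_nonempty V with
  | inl _ => exact ⟨isEmptyElim, isEmptyElim, fun u => isEmptyElim u⟩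
  | inr hV =>
    obtain ⟨z⟩ := hV
    have := hL z
    exact G.exists_listColoring_of_half_degree_lt_card hbip z L (fun v _ => hL v) (by omega)
end

section
/- For every graph G and every positive integer m, χ̄_m(G) ≤ χ̄_{m−1}(G) + χ(G), and consequently χ̄_m(G) ≤ (m+1)·χ(G). -/
open SimpleGraph Finset

/-- The `m`-avoiding chromatic number `χ̄_m(G)`: the least `k` such that for every
assignment `L` of at most `m` forbidden integers to each vertex, there is a
proper coloring `c : V → {1,…,k}` with `c v ∉ L v` for all `v`. -/
noncomputable def avoidChromaticNumber {V : Type*} (G : SimpleGraph V) (m : ℕ) : ℕ :=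
  sInf {k | ∀ L : V → Finset ℤ, (∀ v, (L v).card ≤ m) →
    ∃ c : V → ℕ, (∀ v, c v ∈ Finset.Icc 1 k) ∧ (∀ v, (c v : ℤ) ∉ L v) ∧
      ∀ ⦃u v⦄, G.Adj u v → c u ≠ c v}

/-!
Given a proper coloring `d : V → Fin n` and a palette `{1,…,k}` that works for all lists of
size `m`, give each vertex `v` the fresh color `k + 1 + d v`. Where that color is forbidden, the
rest of the list has at most `m` entries, so the vertex can instead take its color from an
`m`-avoiding coloring with palette `{1,…,k}`. The two palettes are disjoint, so the combined
coloring is proper and uses `k + n` colors; iterating from `χ̄_0 = χ` gives `(m + 1) χ`.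
-/

namespace SimpleGraph

variable {V : Type*} (G : SimpleGraph V)

def IsAvoidColorable (m k : ℕ) : Prop :=
  ∀ L : V → Finset ℤ, (∀ v, (L v).card ≤ m) →
    ∃ c : V → ℕ, (∀ v, c v ∈ Finset.Icc 1 k) ∧ (∀ v, (c v : ℤ) ∉ L v) ∧
      ∀ ⦃u v⦄, G.Adj u v → c u ≠ c v

variable {G}

theorem Colorable.isAvoidColorable_zero {n : ℕ} (hn : G.Colorable n) :
    G.IsAvoidColorable 0 n := by
  obtain ⟨d⟩ := hn
  intro L hL
  refine ⟨fun v => d v + 1, fun v => ?_, fun v => ?_, fun u v huv => ?_⟩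
  · simp only [mem_Icc]
    have := (d v).isLt
    omega
  · simp [Finset.card_eq_zero.mp (Nat.le_zero.mp (hL v))]
  · have := d.valid huv
    simp only [ne_eq, add_left_inj]
    exact Fin.val_ne_of_ne this

theorem IsAvoidColorable.succ_add {m k n : ℕ} (hk : G.IsAvoidColorable m k)
    (hn : G.Colorable n) : G.IsAvoidColorable (m + 1) (k + n) := by
  classical
  obtain ⟨d⟩ := hn
  intro L hL
  let fresh : V → ℕ := fun v => k + 1 + d v
  obtain ⟨c, hc_range, hc_avoid, hc_proper⟩ :=
    hk (fun v => if (fresh v : ℤ) ∈ L v then (L v).erase (fresh v) else ∅) fun v => by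
      split_ifs with h
      · have := Finset.card_erase_of_mem h
        have := hL v
        omega
      · simp
  have hc_lt_fresh : ∀ u v, c u < fresh v := fun u v => by
    have := (mem_Icc.mp (hc_range u)).2
    simp only [fresh]
    omega
  have hfresh_ne : ∀ ⦃u v⦄, G.Adj u v → fresh u ≠ fresh v := fun u v huv => by
    have := Fin.val_ne_of_ne (d.valid huv)
    simp only [fresh]
    omega
  refine ⟨fun v => if (fresh v : ℤ) ∈ L v then c v else fresh v,
    fun v => ?_, fun v => ?_, fun u v huv => ?_⟩ <;> dsimp only
  · have := (d v).isLt
    have := mem_Icc.mp (hc_range v)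
    split_ifs <;> simp only [mem_Icc, fresh] <;> omega
  · split_ifs with h
    · intro hcL
      refine hc_avoid v ?_
      simp only [h, if_true, mem_erase]
      exact ⟨by exact_mod_cast (hc_lt_fresh v v).ne, hcL⟩
    · exact h
  · have := hc_lt_fresh u v
    have := hc_lt_fresh v u
    split_ifs
    · exact hc_proper huv
    · omega
    · omega
    · exact hfresh_ne huv

theorem Colorable.isAvoidColorable {n : ℕ} (hn : G.Colorable n) (m : ℕ) :
    G.IsAvoidColorable m ((m + 1) * n) := by
  induction m with
  | zero => simpa using hn.isAvoidColorable_zero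
  | succ m ih => simpa [add_one_mul] using ih.succ_add hn

end SimpleGraph

section

variable {V : Type*} {G : SimpleGraph V}

theorem avoidChromaticNumber_le {m k : ℕ} (h : G.IsAvoidColorable m k) :
    avoidChromaticNumber G m ≤ k :=
  Nat.sInf_le h

theorem SimpleGraph.Colorable.isAvoidColorable_avoidChromaticNumber {n : ℕ}
    (hn : G.Colorable n) (m : ℕ) : G.IsAvoidColorable m (avoidChromaticNumber G m) :=
  Nat.sInf_mem (s := {k | G.IsAvoidColorable m k}) ⟨_, hn.isAvoidColorable m⟩

theorem SimpleGraph.Colorable.avoidChromaticNumber_succ_le {n : ℕ} (hn : G.Colorable n)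
    (m : ℕ) : avoidChromaticNumber G (m + 1) ≤ avoidChromaticNumber G m + n :=
  avoidChromaticNumber_le ((hn.isAvoidColorable_avoidChromaticNumber m).succ_add hn)

end

theorem stmt17_general {V : Type*} (G : SimpleGraph V) (m : ℕ) (hm : 1 ≤ m) :
    (avoidChromaticNumber G m : ℕ∞) ≤
      (avoidChromaticNumber G (m - 1) : ℕ∞) + G.chromaticNumber ∧
    (avoidChromaticNumber G m : ℕ∞) ≤ (m + 1) * G.chromaticNumber := by
  rcases eq_or_ne G.chromaticNumber ⊤ with hχ | hχ
  · simp [hχ, ENat.mul_top]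
  obtain ⟨n, hχn⟩ := ENat.ne_top_iff_exists.mp hχ
  have hn : G.Colorable n := chromaticNumber_le_iff_colorable.mp hχn.ge
  obtain ⟨m, rfl⟩ := Nat.exists_eq_add_of_le' hm
  rw [← hχn]
  constructor
  · exact_mod_cast hn.avoidChromaticNumber_succ_le m
  · exact_mod_cast avoidChromaticNumber_le (hn.isAvoidColorable _)

/-- For every graph `G` and `m ≥ 1`,
`χ̄_m(G) ≤ χ̄_{m-1}(G) + χ(G)` and consequently `χ̄_m(G) ≤ (m+1)·χ(G)`. -/
theorem stmt17 {V : Type*} [Fintype V] (G : SimpleGraph V) (m : ℕ) (hm : 1 ≤ m) :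
    (avoidChromaticNumber G m : ℕ∞) ≤
      (avoidChromaticNumber G (m - 1) : ℕ∞) + G.chromaticNumber ∧
    (avoidChromaticNumber G m : ℕ∞) ≤ (m + 1) * G.chromaticNumber :=
  stmt17_general G m hm
end

section
/- Let m, p be positive integers and let G be a complete multipartite graph in which every part has size C(p, m) (binomial coefficient). Then χ̄_m(G) ≥ min{ χ(G) + (1 − 1/(m+1))·p , (m+1)·χ(G) }. -/
open SimpleGraph Finset

/-- The complete multipartite graph with parts indexed by `ι`, each of size `s`. -/
def completeMultipartite (ι : Type*) (s : ℕ) : SimpleGraph (ι × Fin s) where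
  Adj a b := a.1 ≠ b.1
  symm := ⟨fun _ _ h => h.symm⟩
  loopless := ⟨fun _ h => h rfl⟩

/-!
Take the forbidden lists of every part to be all `m`-subsets of `{1,…,p}`, and look at the
sets of colors used on the parts: they are pairwise disjoint, and a part whose
colors all lie in `{1,…,p}` must use at least `m + 1` of them, since otherwise they would fit
inside one of its forbidden lists. If all `n` parts are of this kind, at least `(m+1)·n` colors
are used. Otherwise at most `p/(m+1)` parts are of this kind, and each of the remaining ones
uses a color above `p`, so at least `p + n - p/(m+1)` colors are needed. Both bounds are
monotone in `n`, and `χ(G) ≤ n`.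
-/

section AvoidColorable

variable {V : Type*}

def AvoidColorable (G : SimpleGraph V) (m k : ℕ) : Prop :=
  ∀ L : V → Finset ℤ, (∀ v, #(L v) ≤ m) →
    ∃ c : V → ℕ, (∀ v, c v ∈ Icc 1 k) ∧ (∀ v, (c v : ℤ) ∉ L v) ∧
      ∀ ⦃u v⦄, G.Adj u v → c u ≠ c v

theorem avoidColorable_avoidChromaticNumber {G : SimpleGraph V} {m k : ℕ}
    (h : AvoidColorable G m k) : AvoidColorable G m (avoidChromaticNumber G m) :=
  Nat.sInf_mem (s := {k | AvoidColorable G m k}) ⟨k, h⟩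

/-- Give each color class of an `n`-coloring its own block of `m + 1` consecutive colors; a
vertex's list misses at least one color of its block. -/
theorem SimpleGraph.Colorable.avoidColorable {G : SimpleGraph V} {n : ℕ} (hG : G.Colorable n)
    (m : ℕ) : AvoidColorable G m (n * (m + 1)) := by
  obtain ⟨C⟩ := hG
  intro L hL
  let block (v : V) (j : Fin (m + 1)) : ℕ := finProdFinEquiv (C v, j) + 1
  have hfree (v : V) : ∃ j, (block v j : ℤ) ∉ L v := by
    by_contra! hall
    have := card_le_card (show univ.image (fun j => (block v j : ℤ)) ⊆ L v by
      simpa [subset_iff] using hall)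
    rw [card_image_of_injective _ (fun a b hab => Fin.ext (by simpa [block] using hab)), card_univ,
      Fintype.card_fin] at this
    linarith [hL v]
  choose j hj using hfree
  refine ⟨fun v => block v (j v), fun v => ?_, fun v => by exact_mod_cast hj v,
    fun u v huv hc => C.valid huv ?_⟩
  · have := (finProdFinEquiv (C v, j v)).is_lt
    simp only [block, mem_Icc]
    omega
  · exact congrArg Prod.fst (finProdFinEquiv.injective (Fin.ext (Nat.succ_injective hc)))

end AvoidColorable

theorem Finset.lt_card_of_forall_not_subset {α : Type*} {S U : Finset α} {m : ℕ}
    (hSU : S ⊆ U) (hmU : m ≤ #U) (h : ∀ A ⊆ U, #A = m → ¬S ⊆ A) : m < #S := by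
  by_contra! hSm
  obtain ⟨A, hSA, hAU, hA⟩ := exists_subsuperset_card_eq hSU hSm hmU
  exact h A hAU hA hSA

theorem Finset.mul_card_le_card_of_pairwiseDisjoint {ι α : Type*} [DecidableEq α]
    {S : ι → Finset α} (hS : Pairwise fun i j => Disjoint (S i) (S j)) {T : Finset ι}
    {U : Finset α} {a : ℕ}
    (hSU : ∀ i ∈ T, S i ⊆ U) (ha : ∀ i ∈ T, a ≤ #(S i)) : a * #T ≤ #U :=
  calc a * #T = ∑ _ ∈ T, a := by rw [sum_const, smul_eq_mul, mul_comm]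
    _ ≤ ∑ i ∈ T, #(S i) := sum_le_sum ha
    _ = #(T.biUnion S) := (card_biUnion fun i _ j _ hij => hS hij).symm
    _ ≤ #U := card_le_card (biUnion_subset.2 hSU)

theorem mul_le_or_exists_of_colorClasses {ι : Type*} [Fintype ι] {S : ι → Finset ℕ}
    {m p k : ℕ} (hS : Pairwise fun i j => Disjoint (S i) (S j)) (hk : ∀ i, S i ⊆ Icc 1 k)
    (hp : ∀ i, S i ⊆ Icc 1 p → m < #(S i)) :
    (m + 1) * Fintype.card ι ≤ k ∨
      ∃ t, (m + 1) * t ≤ p ∧ p + Fintype.card ι ≤ k + t := by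
  classical
  set T := univ.filter fun i => S i ⊆ Icc 1 p
  by_cases hT : T = univ
  · left
    have hlow : ∀ i, S i ⊆ Icc 1 p := fun i => (mem_filter.1 (hT ▸ mem_univ i : i ∈ T)).2
    simpa using mul_card_le_card_of_pairwiseDisjoint hS (T := univ) (fun i _ => hk i)
      fun i _ => hp i (hlow i)
  · right
    refine ⟨#T, ?_, ?_⟩
    · simpa using mul_card_le_card_of_pairwiseDisjoint hS (fun i hi => (mem_filter.1 hi).2)
        fun i hi => hp i (mem_filter.1 hi).2
    · have hhigh : ∀ i ∈ Tᶜ, S i \ Icc 1 p ⊆ Icc (p + 1) k := fun i _ x hx => by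
        have := hk i (mem_sdiff.1 hx).1
        simp only [mem_sdiff, mem_Icc] at hx this ⊢
        omega
      have hnew : ∀ i ∈ Tᶜ, 1 ≤ #(S i \ Icc 1 p) := fun i hi =>
        card_pos.2 (sdiff_nonempty.2 fun h => mem_compl.1 hi (mem_filter.2 ⟨mem_univ i, h⟩))
      have := mul_card_le_card_of_pairwiseDisjoint
        (fun i j hij => (hS hij).mono sdiff_subset sdiff_subset) hhigh hnew
      have hTlt : #T < Fintype.card ι := (card_lt_iff_ne_univ T).2 hT
      simp only [card_compl, Nat.card_Icc, one_mul] at this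
      omega

theorem AvoidColorable.mul_le_or_exists_of_completeMultipartite_choose {ι : Type*} [Fintype ι]
    {m p k : ℕ} (hmp : m ≤ p) (h : AvoidColorable (completeMultipartite ι (p.choose m)) m k) :
    (m + 1) * Fintype.card ι ≤ k ∨
      ∃ t, (m + 1) * t ≤ p ∧ p + Fintype.card ι ≤ k + t := by
  classical
  let e : Fin (p.choose m) ≃ powersetCard m (Icc 1 p) := (Fintype.equivFinOfCardEq (by simp)).symm
  obtain ⟨c, hck, hcL, hcadj⟩ := h (fun v => (e v.2).1.map Nat.castEmbedding)
    fun v => by simp [(mem_powersetCard.1 (e v.2).2).2]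
  refine mul_le_or_exists_of_colorClasses (S := fun i => univ.image fun x => c (i, x)) ?_ ?_ ?_
  · intro i j hij
    simp only [Finset.disjoint_left, mem_image, mem_univ, true_and]
    rintro _ ⟨x, rfl⟩ ⟨y, hy⟩
    exact hcadj (u := (i, x)) (v := (j, y)) hij hy.symm
  · intro i
    simpa [subset_iff] using fun x => hck (i, x)
  · intro i hi
    refine lt_card_of_forall_not_subset hi (by simpa using hmp) fun A hA hAm hsub => ?_
    let x := e.symm ⟨A, mem_powersetCard.2 ⟨hA, hAm⟩⟩
    refine hcL (i, x) ?_
    simpa [x] using hsub (mem_image_of_mem _ (mem_univ x))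

theorem min_le_of_mul_le_or_exists {m p n k χ : ℕ} (hχ : χ ≤ n)
    (h : (m + 1) * n ≤ k ∨ ∃ t, (m + 1) * t ≤ p ∧ p + n ≤ k + t) :
    min ((χ : ℝ) + (1 - 1 / (m + 1)) * p) ((m + 1) * χ) ≤ k := by
  have hχ' : (χ : ℝ) ≤ n := by exact_mod_cast hχ
  rcases h with h | ⟨t, ht, hk⟩
  · refine (min_le_right _ _).trans ?_
    calc ((m : ℝ) + 1) * χ ≤ (m + 1) * n := by gcongr
      _ ≤ k := by exact_mod_cast h
  · refine (min_le_left _ _).trans ?_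
    have ht' : (t : ℝ) ≤ p / (m + 1) := by
      rw [le_div_iff₀ (by positivity)]
      exact_mod_cast (mul_comm t (m + 1)).trans_le ht
    have hk' : (p : ℝ) + n ≤ k + t := by exact_mod_cast hk
    have hsplit : (1 - 1 / ((m : ℝ) + 1)) * p = p - p / (m + 1) := by field_simp
    linarith

theorem stmt18_general (m p : ℕ) (ι : Type*) [Fintype ι] :
    min ((((completeMultipartite ι (p.choose m)).chromaticNumber.toNat : ℝ)) +
        (1 - 1 / (m + 1)) * p)
      ((m + 1) * ((completeMultipartite ι (p.choose m)).chromaticNumber.toNat : ℝ)) ≤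
    (avoidChromaticNumber (completeMultipartite ι (p.choose m)) m : ℝ) := by
  set G := completeMultipartite ι (p.choose m)
  have hcol : G.Colorable (Fintype.card ι) := (Coloring.mk Prod.fst fun h => h).colorable
  rcases le_or_gt m p with hmp | hpm
  · have hχ := ENat.toNat_le_of_le_natCast hcol.chromaticNumber_le
    have hk := avoidColorable_avoidChromaticNumber (hcol.avoidColorable m)
    exact min_le_of_mul_le_or_exists hχ (hk.mul_le_or_exists_of_completeMultipartite_choose hmp)
  · have : IsEmpty (ι × Fin (p.choose m)) := by
      rw [Nat.choose_eq_zero_of_lt hpm]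
      infer_instance
    simp [G, chromaticNumber_eq_zero_of_isEmpty]

/-- For a complete multipartite graph `G` with every part of size `C(p,m)`:
`χ̄_m(G) ≥ min { χ(G) + (1 - 1/(m+1))·p , (m+1)·χ(G) }`. -/
theorem stmt18 (m p : ℕ) (hm : 0 < m) (hp : 0 < p) (ι : Type*) [Fintype ι] :
    min ((((completeMultipartite ι (p.choose m)).chromaticNumber.toNat : ℝ)) +
        (1 - 1 / (m + 1)) * p)
      ((m + 1) * ((completeMultipartite ι (p.choose m)).chromaticNumber.toNat : ℝ)) ≤
    (avoidChromaticNumber (completeMultipartite ι (p.choose m)) m : ℝ) :=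
  stmt18_general m p ι
end
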